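/- arXiv:1905.08001 — 3 statements merged into one kernel-verified Lean document; each statement's English description precedes it below -/
import Mathlib

section
/- Let ℓ ≥ 2 be an integer and let L > ℓ be a real number. If a path P = v0v1…vℓ in a graph G is L-admissible but not L-good, then there exist at least L pairwise internally vertex-disjoint paths of length ℓ from v0 to vℓ in G. -/
open SimpleGraph

variable {V : Type*} [Fintype V] [DecidableEq V]

/-- The restriction of `p : ℕ → V` to `[0, ℓ]` is a path in `G`: consecutive vertices are
adjacent and all vertices `p 0, …, p ℓ` are distinct. -/
def PathSeq (G : SimpleGraph V) (ℓ : ℕ) (p : ℕ → V) : Prop :=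
  (∀ i, i < ℓ → G.Adj (p i) (p (i + 1))) ∧
  ∀ i j, i < j → j ≤ ℓ → p i ≠ p j

/-- `p` is padded beyond index `ℓ`; used so that each finite sequence corresponds to a
unique function `ℕ → V` when counting. -/
def PadSeq (ℓ : ℕ) (p : ℕ → V) : Prop := ∀ i, ℓ ≤ i → p i = p ℓ

/-- `f(ℓ, L) = L^(5^ℓ)`. -/
noncomputable def fBound (ℓ : ℕ) (L : ℝ) : ℝ := L ^ (5 ^ ℓ)

/-- The recursive notion of an `L`-good path of length `ℓ` (as a sequence `p 0, …, p ℓ`):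
`p` is a path, every proper subpath is `L`-good, and the number of `L`-admissible paths of
length `ℓ` from `p 0` to `p ℓ` is at most `f(ℓ, L)`. -/
def Good (G : SimpleGraph V) (L : ℝ) (ℓ : ℕ) (p : ℕ → V) : Prop :=
  (PathSeq G ℓ p ∧
    ∀ i j, i < j → j ≤ ℓ → ¬(i = 0 ∧ j = ℓ) → Good G L (j - i) (fun a => p (i + a))) ∧
  (Set.ncard {q : ℕ → V | q 0 = p 0 ∧ q ℓ = p ℓ ∧ PadSeq ℓ q ∧ PathSeq G ℓ q ∧
      ∀ i j, i < j → j ≤ ℓ → ¬(i = 0 ∧ j = ℓ) → Good G L (j - i) (fun a => q (i + a))} : ℝ)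
    ≤ fBound ℓ L
termination_by ℓ
decreasing_by all_goals omega

/-- `L`-admissible: a path all of whose proper subpaths are `L`-good. -/
def Admissible (G : SimpleGraph V) (L : ℝ) (ℓ : ℕ) (p : ℕ → V) : Prop :=
  PathSeq G ℓ p ∧
    ∀ i j, i < j → j ≤ ℓ → ¬(i = 0 ∧ j = ℓ) → Good G L (j - i) (fun a => p (i + a))

/-- There exist `N` pairwise internally vertex-disjoint paths of length `m` from `x` to `y`. -/
def ManyDisjointPaths (G : SimpleGraph V) (m : ℕ) (x y : V) (N : ℕ) : Prop :=
  ∃ P : Fin N → (ℕ → V),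
    (∀ a, PathSeq G m (P a) ∧ P a 0 = x ∧ P a m = y) ∧
    (∀ a b, a ≠ b → ∃ i, i ≤ m ∧ P a i ≠ P b i) ∧
    ∀ a b, a ≠ b → ∀ i j, 0 < i → i < m → 0 < j → j < m → P a i ≠ P b j

/-- A pair `(x, y)` of distinct vertices is `(i,j)`-rich (with parameters `k`, `h`, `K`, `δ`). -/
def Rich (G : SimpleGraph V) (k h : ℕ) (K δ : ℝ) (i j : ℕ) (x y : V) : Prop :=
  x ≠ y ∧
  ((2 * (i + j) * h * (2 * k + 1) + 2 * (i + 1) * j : ℕ) : ℝ) *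
      (K * δ) ^ ((i : ℤ) + (j : ℤ) - 1) <
    (Set.ncard {PQ : (ℕ → V) × (ℕ → V) |
      PathSeq G i PQ.1 ∧ PQ.1 0 = x ∧ PadSeq i PQ.1 ∧
      PathSeq G j PQ.2 ∧ PQ.2 0 = y ∧ PadSeq j PQ.2 ∧
      ManyDisjointPaths G (2 * k - i - j) (PQ.1 i) (PQ.2 j) ((h + 2) * (2 * k + 1) + 1)} : ℝ)

/-- `(x, y)` is an `(ℓ, L)`-bad pair: there is an `L`-admissible but not `L`-good path of
length `ℓ` from `x` to `y`. -/
def Bad (G : SimpleGraph V) (L : ℝ) (ℓ : ℕ) (x y : V) : Prop :=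
  ∃ p : ℕ → V, p 0 = x ∧ p ℓ = y ∧ Admissible G L ℓ p ∧ ¬ Good G L ℓ p

/-- `G` contains the `(s-1)`-subdivision of the multigraph on `Fin t` with multiplicity
function `m` as a subgraph: each parallel edge between `a < b` is replaced by a path of
length `s`, these paths being pairwise internally vertex-disjoint, with internal vertices
distinct from all branch vertices. -/
def ContainsMultiSubdiv (G : SimpleGraph V) (t : ℕ) (m : Fin t → Fin t → ℕ) (s : ℕ) : Prop :=
  ∃ (φ : Fin t → V) (π : (a : Fin t) → (b : Fin t) → Fin (m a b) → (ℕ → V)),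
    Function.Injective φ ∧
    (∀ a b, a < b → ∀ c, PathSeq G s (π a b c) ∧ π a b c 0 = φ a ∧ π a b c s = φ b) ∧
    (∀ a b, a < b → ∀ c, ∀ i, 0 < i → i < s → ∀ d, π a b c i ≠ φ d) ∧
    (∀ a b, a < b → ∀ a' b', a' < b' → ∀ (c : Fin (m a b)) (c' : Fin (m a' b')),
      (a, b, (c : ℕ)) ≠ (a', b', (c' : ℕ)) →
      ∀ i i', 0 < i → i < s → 0 < i' → i' < s → π a b c i ≠ π a' b' c' i')

/-- The number of vertices of `H = F^{2k-1}` where `F` is the multigraph on `Fin t` with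
multiplicity function `m`: the `t` branch vertices plus `2k - 1` internal vertices for each
edge (counted with multiplicity). -/
def nH (t k : ℕ) (m : Fin t → Fin t → ℕ) : ℕ :=
  t + (2 * k - 1) * ∑ p : Fin t × Fin t, if p.1 < p.2 then m p.1 p.2 else 0

/-- The minimum degree of `G`. -/
noncomputable def minDeg (G : SimpleGraph V) : ℕ :=
  sInf {d | ∃ v, (G.neighborSet v).ncard = d}

/-- The maximum degree of `G`. -/
noncomputable def maxDeg (G : SimpleGraph V) : ℕ :=
  sSup {d | ∃ v, (G.neighborSet v).ncard = d}

/-- Adjacency in the auxiliary graph `𝒢_ℓ(v)`: the `2k+1` vertices `u 0 = v, u 1, …, u k,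
u' 1, …, u' k` are all distinct and there exist `0 ≤ i, j ≤ k-1` such that the pair
`(u ℓ, u' ℓ)` is `(i,j)`-rich (symmetrised so that this defines a graph). -/
def AuxAdj (G : SimpleGraph V) (k h : ℕ) (K δ : ℝ) (ℓ : Fin (k + 1))
    (u u' : Fin (k + 1) → V) : Prop :=
  Function.Injective u ∧ Function.Injective u' ∧
  (∀ a b : Fin (k + 1), a ≠ 0 → b ≠ 0 → u a ≠ u' b) ∧
  ∃ i j : ℕ, i < k ∧ j < k ∧
    (Rich G k h K δ i j (u ℓ) (u' ℓ) ∨ Rich G k h K δ i j (u' ℓ) (u ℓ))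

/-- `r` satisfies the `k`-colour Ramsey property for `t`: every `k`-colouring of the edges of
the complete graph on `r` vertices contains a monochromatic complete graph on `t` vertices. -/
def RamseyProp (k t r : ℕ) : Prop :=
  ∀ χ : Fin r → Fin r → Fin k, (∀ a b, χ a b = χ b a) →
    ∃ (col : Fin k) (s : Finset (Fin r)), s.card = t ∧
      ∀ a ∈ s, ∀ b ∈ s, a ≠ b → χ a b = col

/-!
Take a maximal family `D` of pairwise internally disjoint admissible paths from `p 0` to `p ℓ`;
it suffices to show `|D| ≥ L`. Otherwise every admissible path `q` meets an inner vertex of some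
member of `D` at one of its own inner positions `i`. Splitting `q` at `i` embeds the admissible
paths through a fixed vertex at position `i` into pairs of admissible paths of lengths `i` and
`ℓ - i`; since the corresponding subpaths of `q` are good, there are at most
`f(i,L) f(ℓ-i,L) ≤ L^(2·5^(ℓ-1))` of them. Summing over the fewer than `L³` choices of member of
`D` and of inner positions gives fewer than `L^(5^ℓ)` admissible paths, so `p` would be good.
-/

section

variable {V : Type*} {G : SimpleGraph V} {L : ℝ}

def admissiblePaths (G : SimpleGraph V) (L : ℝ) (ℓ : ℕ) (x y : V) : Set (ℕ → V) :=
  {q | q 0 = x ∧ q ℓ = y ∧ PadSeq ℓ q ∧ Admissible G L ℓ q}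

def InternallyDisjoint (ℓ : ℕ) (q r : ℕ → V) : Prop :=
  ∀ i j, 0 < i → i < ℓ → 0 < j → j < ℓ → q i ≠ r j

/-- The subpath `q i, …, q j`, shifted to start at index `0` and padded beyond `j - i`. -/
def subpath (q : ℕ → V) (i j : ℕ) : ℕ → V := fun a => q (i + min a (j - i))

theorem PathSeq.congr {m : ℕ} {r r' : ℕ → V} (h : PathSeq G m r)
    (he : ∀ a ≤ m, r a = r' a) : PathSeq G m r' := by
  refine ⟨fun i hi => ?_, fun i j hij hj => ?_⟩
  · rw [← he i (by omega), ← he (i + 1) hi]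
    exact h.1 i hi
  · rw [← he i (by omega), ← he j hj]
    exact h.2 i j hij hj

theorem Good.congr {m : ℕ} {r r' : ℕ → V} (h : Good G L m r) (he : ∀ a ≤ m, r a = r' a) :
    Good G L m r' := by
  induction m using Nat.strong_induction_on generalizing r r' with
  | _ m ih =>
    rw [Good.eq_def] at h ⊢
    obtain ⟨⟨hpath, hsub⟩, hcard⟩ := h
    refine ⟨⟨hpath.congr he, fun i j hij hjm hne => ?_⟩, ?_⟩
    · exact ih (j - i) (by omega) (hsub i j hij hjm hne) fun a ha => he (i + a) (by omega)
    · rwa [← he 0 (Nat.zero_le m), ← he m le_rfl]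

theorem good_iff_admissible_and_ncard_le {m : ℕ} {p : ℕ → V} :
    Good G L m p ↔
      Admissible G L m p ∧ ((admissiblePaths G L m (p 0) (p m)).ncard : ℝ) ≤ fBound m L := by
  rw [Good.eq_def]
  rfl

theorem PadSeq.ext {m : ℕ} {q r : ℕ → V} (hq : PadSeq m q) (hr : PadSeq m r)
    (h : ∀ a ≤ m, q a = r a) : q = r := by
  funext a
  rcases le_or_gt a m with ha | ha
  · exact h a ha
  · rw [hq a ha.le, hr a ha.le, h m le_rfl]

theorem finite_of_forall_padSeq [Finite V] {m : ℕ} {S : Set (ℕ → V)}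
    (h : ∀ q ∈ S, PadSeq m q) : S.Finite :=
  Set.Finite.of_injOn (f := fun q (a : Fin (m + 1)) => q a) (Set.mapsTo_univ _ _)
    (fun q hq r hr hqr => PadSeq.ext (h q hq) (h r hr) fun a ha =>
      congrFun hqr ⟨a, Nat.lt_succ_of_le ha⟩) Set.finite_univ

theorem admissiblePaths_finite [Finite V] (ℓ : ℕ) (x y : V) :
    (admissiblePaths G L ℓ x y).Finite :=
  finite_of_forall_padSeq fun _ hq => hq.2.2.1

theorem subpath_apply {q : ℕ → V} {i j a : ℕ} (ha : a ≤ j - i) : subpath q i j a = q (i + a) := by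
  simp only [subpath, min_eq_left ha]

theorem padSeq_subpath (q : ℕ → V) (i j : ℕ) : PadSeq (j - i) (subpath q i j) := by
  intro a ha
  simp only [subpath, min_eq_right ha, min_self]

theorem Admissible.good_subpath {ℓ i j : ℕ} {q : ℕ → V} (hq : Admissible G L ℓ q) (hij : i < j)
    (hjℓ : j ≤ ℓ) (hne : ¬(i = 0 ∧ j = ℓ)) : Good G L (j - i) (subpath q i j) :=
  (hq.2 i j hij hjℓ hne).congr fun _ ha => (subpath_apply ha).symm

theorem Admissible.subpath_mem_admissiblePaths {ℓ i j : ℕ} {q : ℕ → V}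
    (hq : Admissible G L ℓ q) (hij : i < j) (hjℓ : j ≤ ℓ) (hne : ¬(i = 0 ∧ j = ℓ)) :
    subpath q i j ∈ admissiblePaths G L (j - i) (q i) (q j) := by
  refine ⟨?_, ?_, padSeq_subpath q i j,
    (good_iff_admissible_and_ncard_le.1 (hq.good_subpath hij hjℓ hne)).1⟩
  · rw [subpath_apply (Nat.zero_le _), add_zero]
  · rw [subpath_apply le_rfl, Nat.add_sub_cancel' hij.le]

theorem Admissible.ncard_admissiblePaths_le {ℓ i j : ℕ} {q : ℕ → V} (hq : Admissible G L ℓ q)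
    (hij : i < j) (hjℓ : j ≤ ℓ) (hne : ¬(i = 0 ∧ j = ℓ)) :
    ((admissiblePaths G L (j - i) (q i) (q j)).ncard : ℝ) ≤ fBound (j - i) L := by
  have h := (good_iff_admissible_and_ncard_le.1 (hq.good_subpath hij hjℓ hne)).2
  rwa [subpath_apply (Nat.zero_le _), subpath_apply le_rfl, add_zero,
    Nat.add_sub_cancel' hij.le] at h


theorem fBound_nonneg (m : ℕ) (hL : 0 ≤ L) : 0 ≤ fBound m L :=
  pow_nonneg hL _

theorem pow_three_mul_fBound_mul_fBound_le (hL : 1 ≤ L) {ℓ i : ℕ} (hi : 0 < i) (hiℓ : i < ℓ) :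
    L ^ 3 * (fBound i L * fBound (ℓ - i) L) ≤ fBound ℓ L := by
  unfold fBound
  rw [← pow_add, ← pow_add]
  apply pow_le_pow_right₀ hL
  have hi' : 5 ^ i ≤ 5 ^ (ℓ - 1) := Nat.pow_le_pow_right (by norm_num) (by omega)
  have hℓi : 5 ^ (ℓ - i) ≤ 5 ^ (ℓ - 1) := Nat.pow_le_pow_right (by norm_num) (by omega)
  have hℓ : 5 ^ ℓ = 5 * 5 ^ (ℓ - 1) := by rw [← pow_succ']; congr 1; omega
  have : 1 ≤ 5 ^ (ℓ - 1) := Nat.one_le_pow _ _ (by norm_num)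
  omega

theorem ncard_admissiblePaths_through_le [Finite V] (hL : 0 ≤ L) {ℓ i : ℕ} (hi : 0 < i)
    (hiℓ : i < ℓ) (x y v : V) :
    ({q ∈ admissiblePaths G L ℓ x y | q i = v}.ncard : ℝ) ≤ fBound i L * fBound (ℓ - i) L := by
  set S := {q ∈ admissiblePaths G L ℓ x y | q i = v}
  rcases S.eq_empty_or_nonempty with hS | ⟨q₀, ⟨rfl, rfl, -, hq₀⟩, rfl⟩
  · rw [hS, Set.ncard_empty, Nat.cast_zero]
    exact mul_nonneg (fBound_nonneg i hL) (fBound_nonneg _ hL)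
  have hne₁ : ¬(0 = 0 ∧ i = ℓ) := fun h => hiℓ.ne h.2
  have hne₂ : ¬(i = 0 ∧ ℓ = ℓ) := fun h => hi.ne' h.1
  have hsplit : S.ncard ≤ (admissiblePaths G L i (q₀ 0) (q₀ i) ×ˢ
      admissiblePaths G L (ℓ - i) (q₀ i) (q₀ ℓ)).ncard := by
    refine Set.ncard_le_ncard_of_injOn (fun q => (subpath q 0 i, subpath q i ℓ)) ?_ ?_
      ((admissiblePaths_finite _ _ _).prod (admissiblePaths_finite _ _ _))
    · rintro q ⟨⟨h0, hℓ, -, hq⟩, hqi⟩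
      refine ⟨?_, ?_⟩
      · simpa only [Nat.sub_zero, h0, hqi] using hq.subpath_mem_admissiblePaths hi hiℓ.le hne₁
      · simpa only [hqi, hℓ] using hq.subpath_mem_admissiblePaths hiℓ le_rfl hne₂
    · rintro q ⟨⟨-, -, hq, -⟩, -⟩ r ⟨⟨-, -, hr, -⟩, -⟩ hqr
      obtain ⟨h₁, h₂⟩ := Prod.ext_iff.1 hqr
      refine PadSeq.ext hq hr fun a ha => ?_
      rcases le_or_gt a i with hai | hai
      · simpa only [subpath_apply (Nat.sub_zero i ▸ hai), zero_add] using congrFun h₁ a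
      · simpa only [subpath_apply (show a - i ≤ ℓ - i by omega), Nat.add_sub_cancel' hai.le]
          using congrFun h₂ (a - i)
  calc (S.ncard : ℝ)
      ≤ (admissiblePaths G L i (q₀ 0) (q₀ i)).ncard *
          (admissiblePaths G L (ℓ - i) (q₀ i) (q₀ ℓ)).ncard := by
        exact_mod_cast hsplit.trans_eq Set.ncard_prod
    _ ≤ fBound i L * fBound (ℓ - i) L := by
        gcongr
        · exact fBound_nonneg i hL
        · simpa only [Nat.sub_zero] using hq₀.ncard_admissiblePaths_le hi hiℓ.le hne₁
        · exact hq₀.ncard_admissiblePaths_le hiℓ le_rfl hne₂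

theorem Finset.exists_pairwise_subset_forall_exists_not_rel {α : Type*} {R : α → α → Prop}
    [Std.Symm R] (S : Finset α) (hirr : ∀ a ∈ S, ¬R a a) :
    ∃ D ⊆ S, (D : Set α).Pairwise R ∧ ∀ a ∈ S, ∃ d ∈ D, ¬R a d := by
  classical
  obtain ⟨D, hD, hmax⟩ := Finset.exists_max_image
    (S.powerset.filter fun D : Finset α => (D : Set α).Pairwise R) Finset.card ⟨∅, by simp⟩
  simp only [Finset.mem_filter, Finset.mem_powerset] at hD hmax
  refine ⟨D, hD.1, hD.2, fun a ha => ?_⟩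
  by_contra! hfree
  have haD : a ∉ D := fun h => hirr a ha (hfree a h)
  have hins := hmax (insert a D) ⟨Finset.insert_subset ha hD.1, by
    rw [Finset.coe_insert, Set.pairwise_insert_of_symm]
    exact ⟨hD.2, fun b hb _ => hfree b hb⟩⟩
  rw [Finset.card_insert_of_notMem haD] at hins
  omega

instance (ℓ : ℕ) : Std.Symm (InternallyDisjoint (V := V) ℓ) where
  symm _ _ h i j hi hiℓ hj hjℓ := (h j i hj hjℓ hi hiℓ).symm

theorem not_internallyDisjoint_self {ℓ : ℕ} (hℓ : 2 ≤ ℓ) (q : ℕ → V) :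
    ¬InternallyDisjoint ℓ q q :=
  fun h => h 1 1 one_pos (by omega) one_pos (by omega) rfl

theorem manyDisjointPaths_of_pairwise {m : ℕ} {x y : V} (D : Finset (ℕ → V))
    (hD : ∀ q ∈ D, PathSeq G m q ∧ q 0 = x ∧ q m = y ∧ PadSeq m q)
    (hpw : (D : Set (ℕ → V)).Pairwise (InternallyDisjoint m)) :
    ManyDisjointPaths G m x y D.card := by
  let P : Fin D.card → D := D.equivFin.symm
  have hP : ∀ a b, a ≠ b → (P a : ℕ → V) ≠ P b :=
    fun a b hab => Subtype.coe_injective.ne (D.equivFin.symm.injective.ne hab)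
  refine ⟨fun a => P a, fun a => ?_, fun a b hab => ?_, fun a b hab => ?_⟩
  · obtain ⟨hpath, h0, hm, -⟩ := hD _ (P a).2
    exact ⟨hpath, h0, hm⟩
  · by_contra! h
    exact hP a b hab (PadSeq.ext (hD _ (P a).2).2.2.2 (hD _ (P b).2).2.2.2 h)
  · exact hpw (P a).2 (P b).2 (hP a b hab)

theorem pow_three_mul_ncard_admissiblePaths_le [Finite V] (hL : 1 ≤ L) {ℓ : ℕ} {x y : V}
    (D : Finset (ℕ → V))
    (hmeet : ∀ q ∈ admissiblePaths G L ℓ x y, ∃ d ∈ D, ¬InternallyDisjoint ℓ q d) :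
    L ^ 3 * (admissiblePaths G L ℓ x y).ncard ≤ ((D.card * (ℓ - 1) ^ 2 : ℕ) : ℝ) * fBound ℓ L := by
  set S := admissiblePaths G L ℓ x y
  let T := D ×ˢ Finset.Ioo 0 ℓ ×ˢ Finset.Ioo 0 ℓ
  have hcover : S = ⋃ t ∈ T, {q ∈ S | q t.2.1 = t.1 t.2.2} := by
    refine subset_antisymm (fun q hq => ?_) (Set.iUnion₂_subset fun _ _ => Set.sep_subset _ _)
    obtain ⟨d, hd, hmet⟩ := hmeet q hq
    simp only [InternallyDisjoint, not_forall, not_not] at hmet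
    obtain ⟨i, j, hi, hiℓ, hj, hjℓ, hij⟩ := hmet
    exact Set.mem_biUnion (x := (d, i, j)) (by simp [T, hd, hi, hiℓ, hj, hjℓ]) ⟨hq, hij⟩
  have hT : T.card = D.card * (ℓ - 1) ^ 2 := by
    simp only [T, Finset.card_product, Nat.card_Ioo, Nat.sub_zero]
    ring
  calc L ^ 3 * (S.ncard : ℝ)
      ≤ L ^ 3 * ∑ t ∈ T, ({q ∈ S | q t.2.1 = t.1 t.2.2}.ncard : ℝ) := by
        have h := Finset.set_ncard_biUnion_le T fun t => {q ∈ S | q t.2.1 = t.1 t.2.2}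
        rw [← hcover] at h
        gcongr
        exact_mod_cast h
    _ ≤ ∑ _t ∈ T, fBound ℓ L := by
        rw [Finset.mul_sum]
        refine Finset.sum_le_sum fun t ht => ?_
        simp only [T, Finset.mem_product, Finset.mem_Ioo] at ht
        calc L ^ 3 * ({q ∈ S | q t.2.1 = t.1 t.2.2}.ncard : ℝ)
            ≤ L ^ 3 * (fBound t.2.1 L * fBound (ℓ - t.2.1) L) := by
              gcongr
              exact ncard_admissiblePaths_through_le (by linarith) ht.2.1.1 ht.2.1.2 x y _
          _ ≤ fBound ℓ L := pow_three_mul_fBound_mul_fBound_le hL ht.2.1.1 ht.2.1.2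
    _ = ((D.card * (ℓ - 1) ^ 2 : ℕ) : ℝ) * fBound ℓ L := by
        rw [Finset.sum_const, nsmul_eq_mul, hT]

end

theorem many_disjoint_paths_of_admissible_not_good_general
    {V : Type*} [Fintype V] (G : SimpleGraph V)
    (ℓ : ℕ) (hℓ : 2 ≤ ℓ) (L : ℝ) (hL : (ℓ : ℝ) < L)
    (p : ℕ → V) (hadm : Admissible G L ℓ p) (hgood : ¬ Good G L ℓ p) :
    ∃ N : ℕ, L ≤ (N : ℝ) ∧ ManyDisjointPaths G ℓ (p 0) (p ℓ) N := by
  have hL₁ : 1 ≤ L := by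
    have : (2 : ℝ) ≤ ℓ := by exact_mod_cast hℓ
    linarith
  have hS := admissiblePaths_finite (G := G) (L := L) ℓ (p 0) (p ℓ)
  have hmany : fBound ℓ L < (admissiblePaths G L ℓ (p 0) (p ℓ)).ncard := by
    by_contra! h
    exact hgood (good_iff_admissible_and_ncard_le.2 ⟨hadm, h⟩)
  obtain ⟨D, hDS, hpw, hmeet⟩ := hS.toFinset.exists_pairwise_subset_forall_exists_not_rel
    fun q _ => not_internallyDisjoint_self hℓ q
  refine ⟨D.card, ?_, manyDisjointPaths_of_pairwise D (fun q hq => ?_) hpw⟩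
  · by_contra! hD
    have hcount := pow_three_mul_ncard_admissiblePaths_le hL₁ D
      fun q hq => hmeet q (hS.mem_toFinset.2 hq)
    have hℓL : ((ℓ - 1 : ℕ) : ℝ) < L := by
      have : ((ℓ - 1 : ℕ) : ℝ) ≤ ℓ := by exact_mod_cast Nat.sub_le ℓ 1
      linarith
    have hsmall : ((D.card * (ℓ - 1) ^ 2 : ℕ) : ℝ) < L ^ 3 := by
      push_cast
      calc (D.card : ℝ) * ((ℓ - 1 : ℕ) : ℝ) ^ 2 ≤ D.card * L ^ 2 := by gcongr
        _ < L * L ^ 2 := by gcongr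
        _ = L ^ 3 := by ring
    have hf : 0 < fBound ℓ L := pow_pos (by linarith) _
    nlinarith
  · obtain ⟨h0, hℓ', hpad, hq⟩ := hS.mem_toFinset.1 (hDS hq)
    exact ⟨hq.1, h0, hℓ', hpad⟩

/-- **Lemma 2.3.** Let `ℓ ≥ 2` and `L > ℓ`. If a path `p 0 … p ℓ` is
`L`-admissible but not `L`-good, then there exist at least `L` pairwise internally
vertex-disjoint paths of length `ℓ` from `p 0` to `p ℓ`. -/
theorem many_disjoint_paths_of_admissible_not_good
    {V : Type*} [Fintype V] [DecidableEq V] (G : SimpleGraph V)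
    (ℓ : ℕ) (hℓ : 2 ≤ ℓ) (L : ℝ) (hL : (ℓ : ℝ) < L)
    (p : ℕ → V) (hadm : Admissible G L ℓ p) (hgood : ¬ Good G L ℓ p) :
    ∃ N : ℕ, L ≤ (N : ℝ) ∧ ManyDisjointPaths G ℓ (p 0) (p ℓ) N :=
  many_disjoint_paths_of_admissible_not_good_general G ℓ hℓ L hL p hadm hgood
end

section
/- Let k ≥ 1 and h ≥ 1 be integers, let G be a graph, let x ≠ y be vertices of G, and let i, j be nonnegative integers with i + j < 2k. Let R_1, …, R_α (with α ≤ h) be pairwise internally vertex-disjoint paths of length 2k from x to y, and let T be the set of all vertices lying on at least one of R_1, …, R_α. Suppose P is a path of length i starting at x that avoids T∖{x}, Q is a path of length j starting at y that avoids T∖{y}, P and Q are vertex-disjoint, and there are at least (h+2)(2k+1)+1 pairwise internally vertex-disjoint paths of length 2k−i−j between the endpoint of P and the endpoint of Q. Then there is a path of length 2k from x to y in G that is internally vertex-disjoint from each of R_1, …, R_α. -/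
open SimpleGraph

variable {V : Type*} [Fintype V] [DecidableEq V]

/-- **Claim inside Lemma 4.2.** Given `α ≤ h` pairwise internally
vertex-disjoint `x`–`y` paths `R 0, …, R (α-1)` of length `2k` with vertex set `T`, a path
`P` of length `i` from `x` avoiding `T \ {x}`, a path `Q` of length `j` from `y` avoiding
`T \ {y}`, with `P` and `Q` vertex-disjoint, and at least `(h+2)(2k+1)+1` pairwise
internally vertex-disjoint paths of length `2k-i-j` between the endpoints of `P` and `Q`,
there is a path of length `2k` from `x` to `y` internally vertex-disjoint from every `R a`. -/
theorem extend_to_new_path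
    {V : Type*} [Fintype V] [DecidableEq V] (G : SimpleGraph V)
    (k h : ℕ) (hk : 1 ≤ k) (hh : 1 ≤ h)
    (x y : V) (hxy : x ≠ y) (i j : ℕ) (hij : i + j < 2 * k)
    (α : ℕ) (hα : α ≤ h) (R : Fin α → (ℕ → V))
    (hR : ∀ a, PathSeq G (2 * k) (R a) ∧ R a 0 = x ∧ R a (2 * k) = y)
    (hRdisj : ∀ a b, a ≠ b →
      ∀ s s', 0 < s → s < 2 * k → 0 < s' → s' < 2 * k → R a s ≠ R b s')
    (P Q : ℕ → V)
    (hP : PathSeq G i P) (hP0 : P 0 = x)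
    (hPT : ∀ b, b ≤ i → (∃ a, ∃ s, s ≤ 2 * k ∧ R a s = P b) → P b = x)
    (hQ : PathSeq G j Q) (hQ0 : Q 0 = y)
    (hQT : ∀ b, b ≤ j → (∃ a, ∃ s, s ≤ 2 * k ∧ R a s = Q b) → Q b = y)
    (hPQ : ∀ a, a ≤ i → ∀ b, b ≤ j → P a ≠ Q b)
    (hmany : ManyDisjointPaths G (2 * k - i - j) (P i) (Q j) ((h + 2) * (2 * k + 1) + 1)) :
    ∃ p : ℕ → V, PathSeq G (2 * k) p ∧ p 0 = x ∧ p (2 * k) = y ∧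
      ∀ a, ∀ s s', 0 < s → s < 2 * k → 0 < s' → s' < 2 * k → p s ≠ R a s' := by
  classical
  obtain ⟨W, hW1, hW2, hW3⟩ := hmany
  set m := 2 * k - i - j with hm
  have hm1 : 1 ≤ m := by omega
  set B : Finset V :=
    ((Finset.range (i+1)).image P ∪ (Finset.range (j+1)).image Q) ∪
      ((Finset.univ ×ˢ Finset.Ioo 0 (2*k)).image (fun q : Fin α × ℕ => R q.1 q.2)) with hB
  have hPB : ∀ b, b ≤ i → P b ∈ B := by
    intro b hb
    exact Finset.mem_union_left _ (Finset.mem_union_left _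
      (Finset.mem_image.mpr ⟨b, Finset.mem_range.mpr (by omega), rfl⟩))
  have hQB : ∀ b, b ≤ j → Q b ∈ B := by
    intro b hb
    exact Finset.mem_union_left _ (Finset.mem_union_right _
      (Finset.mem_image.mpr ⟨b, Finset.mem_range.mpr (by omega), rfl⟩))
  have hRB : ∀ a s', 0 < s' → s' < 2*k → R a s' ∈ B := by
    intro a s' h1 h2
    exact Finset.mem_union_right _
      (Finset.mem_image.mpr ⟨(a, s'),
        Finset.mem_product.mpr ⟨Finset.mem_univ _, Finset.mem_Ioo.mpr ⟨h1, h2⟩⟩, rfl⟩)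
  have hBcard : B.card ≤ (i+1) + (j+1) + α * (2*k-1) := by
    have c1 : ((Finset.range (i+1)).image P).card ≤ i+1 :=
      le_trans Finset.card_image_le (le_of_eq (Finset.card_range _))
    have c2 : ((Finset.range (j+1)).image Q).card ≤ j+1 :=
      le_trans Finset.card_image_le (le_of_eq (Finset.card_range _))
    have c3 : (((Finset.univ : Finset (Fin α)) ×ˢ Finset.Ioo 0 (2*k)).image
        (fun q : Fin α × ℕ => R q.1 q.2)).card ≤ α * (2*k-1) := by
      refine le_trans Finset.card_image_le (le_of_eq ?_)
      rw [Finset.card_product, Finset.card_univ, Fintype.card_fin, Nat.card_Ioo]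
      simp
    exact le_trans (Finset.card_union_le _ _)
      (add_le_add (le_trans (Finset.card_union_le _ _) (add_le_add c1 c2)) c3)
  have hgood : ∃ a : Fin ((h + 2) * (2 * k + 1) + 1), ∀ s, 0 < s → s < m → W a s ∉ B := by
    by_contra hcon
    push_neg at hcon
    choose s hs1 hs2 hs3 using hcon
    have hinj : Set.InjOn (fun a : Fin ((h + 2) * (2 * k + 1) + 1) => W a (s a)) (Finset.univ : Finset (Fin ((h + 2) * (2 * k + 1) + 1))) := by
      intro a _ b _ heq
      by_contra hne
      exact hW3 a b hne (s a) (s b) (hs1 a) (hs2 a) (hs1 b) (hs2 b) heq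
    have hle : (Finset.univ : Finset (Fin ((h + 2) * (2 * k + 1) + 1))).card ≤ B.card :=
      Finset.card_le_card_of_injOn _ (fun a _ => hs3 a) hinj
    have hle' : (h + 2) * (2 * k + 1) + 1 ≤ B.card := by simpa using hle
    have h3 : (h + 2) * (2 * k + 1) + 1 ≤ ((i+1) + (j+1)) + α * (2*k-1) := le_trans hle' hBcard
    have c1 : α * (2*k-1) ≤ h * (2*k+1) := Nat.mul_le_mul hα (by omega)
    have c2 : (h + 2) * (2 * k + 1) + 1 ≤ (2*k+1) + h * (2*k+1) :=
      le_trans h3 (Nat.add_le_add (by omega) c1)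
    have c3 : (2*k+1) + h * (2*k+1) = (h+1)*(2*k+1) := by ring
    have c4 : (h+1)*(2*k+1) < (h + 2) * (2 * k + 1) + 1 :=
      Nat.lt_succ_of_le (Nat.mul_le_mul (by omega) (le_refl _))
    rw [c3] at c2
    exact Nat.lt_irrefl _ (lt_of_le_of_lt c2 c4)
  obtain ⟨a0, ha0⟩ := hgood
  have hWpath : PathSeq G m (W a0) := (hW1 a0).1
  have hW0a : W a0 0 = P i := (hW1 a0).2.1
  have hWma : W a0 m = Q j := (hW1 a0).2.2
  have havoid : ∀ s, 0 < s → s < m → ∀ v ∈ B, W a0 s ≠ v := by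
    intro s h1 h2 v hv heq
    exact ha0 s h1 h2 (heq ▸ hv)
  set p : ℕ → V := fun t =>
    if t ≤ i then P t else if t ≤ i + m then W a0 (t - i) else Q (2*k - t) with hp
  have hpA : ∀ t, t ≤ i → p t = P t := by
    intro t ht; simp only [hp]; rw [if_pos ht]
  have hpB2 : ∀ t, i ≤ t → t ≤ i + m → p t = W a0 (t - i) := by
    intro t h1 h2
    rcases eq_or_lt_of_le h1 with heq | h1'
    · subst heq
      simp only [hp]; rw [if_pos (le_refl i), Nat.sub_self]
      exact hW0a.symm
    · simp only [hp]; rw [if_neg (by omega), if_pos h2]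
  have hpC : ∀ t, i + m ≤ t → t ≤ 2*k → p t = Q (2*k - t) := by
    intro t h1 h2
    rcases eq_or_lt_of_le h1 with heq | h1'
    · subst heq
      simp only [hp]; rw [if_neg (by omega), if_pos (le_refl _)]
      have e1 : i + m - i = m := by omega
      have e2 : 2*k - (i + m) = j := by omega
      rw [e1, e2]; exact hWma
    · simp only [hp]; rw [if_neg (by omega), if_neg (by omega)]
  refine ⟨p, ⟨?_, ?_⟩, ?_, ?_, ?_⟩
  · -- adjacency
    intro t ht
    by_cases h1 : t + 1 ≤ i
    · rw [hpA t (by omega), hpA (t+1) h1]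
      exact hP.1 t (by omega)
    · by_cases h2 : t + 1 ≤ i + m
      · rw [hpB2 t (by omega) (by omega), hpB2 (t+1) (by omega) h2]
        have e : t + 1 - i = (t - i) + 1 := by omega
        rw [e]
        exact hWpath.1 (t - i) (by omega)
      · rw [hpC t (by omega) (by omega), hpC (t+1) (by omega) (by omega)]
        have hlt : 2*k - (t+1) < j := by omega
        have := hQ.1 (2*k - (t+1)) hlt
        have e : 2*k - (t+1) + 1 = 2*k - t := by omega
        rw [e] at this
        exact this.symm
  · -- distinctness
    intro s t hst ht
    by_cases ht1 : t ≤ i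
    · rw [hpA s (by omega), hpA t ht1]
      exact hP.2 s t hst ht1
    · by_cases ht2 : t < i + m
      · rw [hpB2 t (by omega) (by omega)]
        by_cases hs1 : s ≤ i
        · rw [hpA s hs1]
          exact Ne.symm (havoid (t - i) (by omega) (by omega) (P s) (hPB s hs1))
        · rw [hpB2 s (by omega) (by omega)]
          exact hWpath.2 (s - i) (t - i) (by omega) (by omega)
      · rw [hpC t (by omega) (by omega)]
        by_cases hs1 : s ≤ i
        · rw [hpA s hs1]
          exact hPQ s hs1 (2*k - t) (by omega)
        · by_cases hs2 : s < i + m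
          · rw [hpB2 s (by omega) (by omega)]
            exact havoid (s - i) (by omega) (by omega) (Q (2*k - t)) (hQB (2*k - t) (by omega))
          · rw [hpC s (by omega) (by omega)]
            exact Ne.symm (hQ.2 (2*k - t) (2*k - s) (by omega) (by omega))
  · rw [hpA 0 (by omega), hP0]
  · rw [hpC (2*k) (by omega) (le_refl _)]
    have e : 2*k - 2*k = 0 := by omega
    rw [e, hQ0]
  · intro a s s' hs0 hs2k hs'0 hs'2k
    by_cases h1 : s ≤ i
    · rw [hpA s h1]
      intro heq
      have hx : P s = x := hPT s h1 ⟨a, s', by omega, heq.symm⟩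
      exact hP.2 0 s hs0 h1 (by rw [hP0, hx])
    · by_cases h2 : s < i + m
      · rw [hpB2 s (by omega) (by omega)]
        exact havoid (s - i) (by omega) (by omega) _ (hRB a s' hs'0 hs'2k)
      · rw [hpC s (by omega) (by omega)]
        intro heq
        have hy : Q (2*k - s) = y := hQT (2*k - s) (by omega) ⟨a, s', by omega, heq.symm⟩
        exact hQ.2 0 (2*k - s) (by omega) (by omega) (by rw [hQ0, hy])
end

section
/- Let F be a multigraph with t vertices, let k ≥ 1 be an integer, and let H = F^{2k-1}. Let K, δ > 0 and let G be a graph with maximum degree at most Kδ that does not contain H as a subgraph. Then for every vertex v of G and every 1 ≤ ℓ ≤ k, the auxiliary graph 𝒢_ℓ(v) (with richness parameters k, h = |V(H)|, K, δ) contains no clique on t vertices. -/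
open SimpleGraph

variable {V : Type*} [Fintype V] [DecidableEq V]

/-!
A clique `c` of `𝒢_ℓ(v)` gives `t` distinct branch vertices `c a ℓ`, any two of which form an
`(i, j)`-rich pair `(x, y)` with `i, j < k`. With `Δ = ⌊Kδ⌋`, at most
`(|S| (i + j) + (i + 1) j) Δ^(i+j-1)` pairs `(P, Q)` of paths of lengths `i, j` from `x, y` meet a
set `S ∋ y` after their first vertex or meet each other, and for `|S| ≤ h` this is below the
richness threshold. So some counted pair `(P, Q)` avoids all that, one of its
`(h + 2)(2k + 1) + 1` internally disjoint connecting paths has its interior outside `S ∪ P ∪ Q`,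
and `P`, that path and `Q` reversed form an `x`–`y` path of length `2k` with interior outside `S`.
Routing the edges of `F` one by one around the branch vertices and the interiors routed so far
(never more than `h = |V(H)|` vertices) embeds `H = F^{2k-1}` in `G`.
-/

theorem Finset.set_ncard_biUnion_le_card_mul {α ι : Type*} (t : Finset ι) (s : ι → Set α) {n : ℕ}
    (h : ∀ i ∈ t, (s i).ncard ≤ n) : (⋃ i ∈ t, s i).ncard ≤ t.card * n :=
  (t.set_ncard_biUnion_le s).trans <| by simpa using Finset.sum_le_sum h

theorem Set.ncard_le_mul_ncard_of_mapsTo {α β : Type*} {f : α → β} {s : Set α} {t : Set β}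
    (ht : t.Finite) (hf : Set.MapsTo f s t) {n : ℕ} (hn : ∀ b ∈ t, {a ∈ s | f a = b}.ncard ≤ n) :
    s.ncard ≤ n * t.ncard := by
  classical
  have hs : s = ⋃ b ∈ ht.toFinset, {a ∈ s | f a = b} := by
    ext a
    simp only [Set.mem_iUnion, Set.Finite.mem_toFinset, Set.mem_ofPred_eq, exists_prop]
    exact ⟨fun ha => ⟨f a, hf ha, ha, rfl⟩, fun ⟨_, _, ha, _⟩ => ha⟩
  rw [hs, Set.ncard_eq_toFinset_card t ht, mul_comm]
  exact Finset.set_ncard_biUnion_le_card_mul _ _ fun b hb => hn b (ht.mem_toFinset.1 hb)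

section Paths

variable {V : Type*} {G : SimpleGraph V}

def pathsFrom (G : SimpleGraph V) (n : ℕ) (x : V) : Set (ℕ → V) :=
  {q | PathSeq G n q ∧ q 0 = x ∧ PadSeq n q}

theorem pathsFrom_finite [Finite V] (n : ℕ) (x : V) : (pathsFrom G n x).Finite := by
  refine Set.Finite.of_finite_image (f := fun q (r : Fin (n + 1)) => q r) (Set.toFinite _) ?_
  intro q hq q' hq' h
  funext r
  have hfin : ∀ r, r ≤ n → q r = q' r := fun r hr => congrFun h ⟨r, by omega⟩
  rcases le_or_gt r n with hr | hr
  · exact hfin r hr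
  · rw [hq.2.2 r hr.le, hq'.2.2 r hr.le, hfin n le_rfl]

theorem shift_mem_pathsFrom {n : ℕ} {x : V} {q : ℕ → V} (hq : q ∈ pathsFrom G (n + 1) x) :
    (fun a => q (a + 1)) ∈ pathsFrom G n (q 1) := by
  obtain ⟨⟨hadj, hinj⟩, -, hpad⟩ := hq
  exact ⟨⟨fun a ha => hadj (a + 1) (by omega), fun a b hab hb => hinj (a + 1) (b + 1)
    (by omega) (by omega)⟩, rfl, fun a ha => hpad (a + 1) (by omega)⟩

theorem adj_of_mem_pathsFrom {n : ℕ} {x : V} {q : ℕ → V} (hq : q ∈ pathsFrom G (n + 1) x) :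
    G.Adj x (q 1) :=
  hq.2.1 ▸ hq.1.1 0 (by omega)

theorem injOn_shift (x : V) : Set.InjOn (fun (q : ℕ → V) a => q (a + 1)) {q | q 0 = x} := by
  intro q hq q' hq' h
  funext r
  cases r with
  | zero => exact hq.trans hq'.symm
  | succ r => exact congrFun h r

variable [Finite V] {Δ : ℕ} (hΔ : ∀ v, (G.neighborSet v).ncard ≤ Δ)
include hΔ

theorem ncard_pathsFrom_le (n : ℕ) (x : V) : (pathsFrom G n x).ncard ≤ Δ ^ n := by
  induction n generalizing x with
  | zero =>
    refine (Set.ncard_le_one (pathsFrom_finite 0 x)).2 fun q hq q' hq' => funext fun r => ?_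
    rw [hq.2.2 r r.zero_le, hq'.2.2 r r.zero_le, hq.2.1, hq'.2.1]
  | succ n ih =>
    calc (pathsFrom G (n + 1) x).ncard ≤ Δ ^ n * (G.neighborSet x).ncard := by
          refine Set.ncard_le_mul_ncard_of_mapsTo (Set.toFinite _)
            (fun q hq => adj_of_mem_pathsFrom hq) fun y _ => ?_
          refine (Set.ncard_le_ncard_of_injOn _ (fun q hq => ?_)
            ((injOn_shift x).mono fun q hq => hq.1.2.1) (pathsFrom_finite n y)).trans (ih y)
          exact hq.2 ▸ shift_mem_pathsFrom hq.1
      _ ≤ Δ ^ (n + 1) := by rw [pow_succ]; exact Nat.mul_le_mul_left _ (hΔ x)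

theorem ncard_pathsFrom_apply_eq_le (n : ℕ) (x w : V) {r : ℕ} (hr : 0 < r) (hrn : r ≤ n) :
    {q ∈ pathsFrom G n x | q r = w}.ncard ≤ Δ ^ (n - 1) := by
  induction n generalizing x r with
  | zero => omega
  | succ n ih =>
    obtain rfl | hr1 := eq_or_lt_of_le (show 1 ≤ r from hr)
    · refine (Set.ncard_le_ncard_of_injOn _ (fun q hq => ?_)
        ((injOn_shift x).mono fun q hq => hq.1.2.1) (pathsFrom_finite n w)).trans
        (ncard_pathsFrom_le hΔ n w)
      exact hq.2 ▸ shift_mem_pathsFrom hq.1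
    calc {q ∈ pathsFrom G (n + 1) x | q r = w}.ncard
        ≤ Δ ^ (n - 1) * (G.neighborSet x).ncard := by
          refine Set.ncard_le_mul_ncard_of_mapsTo (Set.toFinite _)
            (fun q hq => adj_of_mem_pathsFrom hq.1) fun y _ => ?_
          refine (Set.ncard_le_ncard_of_injOn _ (fun q hq => ?_)
            ((injOn_shift x).mono fun q hq => hq.1.1.2.1)
            ((pathsFrom_finite n y).subset (Set.sep_subset _ _))).trans
            (ih y (r := r - 1) (by omega) (by omega))
          refine ⟨hq.2 ▸ shift_mem_pathsFrom hq.1.1, ?_⟩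
          simpa [Nat.sub_add_cancel hr] using hq.1.2
      _ ≤ Δ ^ (n + 1 - 1) := by
          rw [Nat.add_sub_cancel, ← pow_sub_one_mul (by omega : n ≠ 0)]
          exact Nat.mul_le_mul_left _ (hΔ x)

end Paths

section Pairs

variable {V : Type*} {G : SimpleGraph V}

def PairAvoids (S : Finset V) (i j : ℕ) (P Q : ℕ → V) : Prop :=
  (∀ r, 0 < r → r ≤ i → P r ∉ S) ∧ (∀ r, 0 < r → r ≤ j → Q r ∉ S) ∧
    ∀ r ≤ i, ∀ r' ≤ j, P r ≠ Q r'

variable [Finite V] {Δ : ℕ} (hΔ : ∀ v, (G.neighborSet v).ncard ≤ Δ) {i j : ℕ} {x y : V}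
include hΔ

theorem ncard_pairs_snd_apply_eq_le (g : (ℕ → V) → V) {r : ℕ} (hr : 0 < r) (hrj : r ≤ j) :
    {PQ ∈ pathsFrom G i x ×ˢ pathsFrom G j y | PQ.2 r = g PQ.1}.ncard ≤ Δ ^ (i + j - 1) := by
  calc _ ≤ Δ ^ (j - 1) * (pathsFrom G i x).ncard := by
        refine Set.ncard_le_mul_ncard_of_mapsTo (pathsFrom_finite i x)
          (fun PQ hPQ => hPQ.1.1) fun P _ => ?_
        refine (Set.ncard_le_ncard_of_injOn Prod.snd (t := {q ∈ pathsFrom G j y | q r = g P})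
          ?_ ?_ ((pathsFrom_finite j y).subset (Set.sep_subset _ _))).trans
          (ncard_pathsFrom_apply_eq_le hΔ j y (g P) hr hrj)
        · rintro PQ ⟨⟨⟨-, hQ⟩, hPQ⟩, rfl⟩
          exact ⟨hQ, hPQ⟩
        · rintro PQ ⟨-, h⟩ PQ' ⟨-, h'⟩ hsnd
          exact Prod.ext (h.trans h'.symm) hsnd
    _ ≤ Δ ^ (j - 1) * Δ ^ i := Nat.mul_le_mul_left _ (ncard_pathsFrom_le hΔ i x)
    _ = Δ ^ (i + j - 1) := by rw [← pow_add]; congr 1; omega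

theorem ncard_pairs_fst_apply_eq_le {r : ℕ} (hr : 0 < r) (hri : r ≤ i) (s : V) :
    {PQ ∈ pathsFrom G i x ×ˢ pathsFrom G j y | PQ.1 r = s}.ncard ≤ Δ ^ (i + j - 1) := by
  have hprod : {PQ ∈ pathsFrom G i x ×ˢ pathsFrom G j y | PQ.1 r = s}
      = {q ∈ pathsFrom G i x | q r = s} ×ˢ pathsFrom G j y := by
    ext PQ
    simp only [Set.mem_prod, Set.mem_ofPred_eq]
    tauto
  calc _ ≤ Δ ^ (i - 1) * Δ ^ j := by
        rw [hprod, Set.ncard_prod]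
        exact Nat.mul_le_mul (ncard_pathsFrom_apply_eq_le hΔ i x s hr hri)
          (ncard_pathsFrom_le hΔ j y)
    _ = Δ ^ (i + j - 1) := by rw [← pow_add]; congr 1; omega

theorem ncard_not_pairAvoids_le (hxy : x ≠ y) {S : Finset V} (hy : y ∈ S) :
    {PQ ∈ pathsFrom G i x ×ˢ pathsFrom G j y | ¬ PairAvoids S i j PQ.1 PQ.2}.ncard
      ≤ (S.card * (i + j) + (i + 1) * j) * Δ ^ (i + j - 1) := by
  set U₁ := ⋃ p ∈ S ×ˢ Finset.Icc 1 i,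
    {PQ ∈ pathsFrom G i x ×ˢ pathsFrom G j y | PQ.1 p.2 = p.1}
  set U₂ := ⋃ p ∈ S ×ˢ Finset.Icc 1 j,
    {PQ ∈ pathsFrom G i x ×ˢ pathsFrom G j y | PQ.2 p.2 = p.1}
  set U₃ := ⋃ p ∈ Finset.range (i + 1) ×ˢ Finset.Icc 1 j,
    {PQ ∈ pathsFrom G i x ×ˢ pathsFrom G j y | PQ.2 p.2 = PQ.1 p.1}
  have hsub : {PQ ∈ pathsFrom G i x ×ˢ pathsFrom G j y | ¬ PairAvoids S i j PQ.1 PQ.2}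
      ⊆ U₁ ∪ U₂ ∪ U₃ := by
    rintro PQ ⟨hPQ, hbad⟩
    by_cases h₁ : ∀ r, 0 < r → r ≤ i → PQ.1 r ∉ S
    swap
    · push Not at h₁
      obtain ⟨r, hr, hri, hrS⟩ := h₁
      exact .inl <| .inl <| Set.mem_iUnion₂.2 ⟨(PQ.1 r, r),
        Finset.mem_product.2 ⟨hrS, Finset.mem_Icc.2 ⟨hr, hri⟩⟩, hPQ, rfl⟩
    by_cases h₂ : ∀ r, 0 < r → r ≤ j → PQ.2 r ∉ S
    swap
    · push Not at h₂
      obtain ⟨r, hr, hrj, hrS⟩ := h₂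
      exact .inl <| .inr <| Set.mem_iUnion₂.2 ⟨(PQ.2 r, r),
        Finset.mem_product.2 ⟨hrS, Finset.mem_Icc.2 ⟨hr, hrj⟩⟩, hPQ, rfl⟩
    have h₃ : ∃ r ≤ i, ∃ r' ≤ j, PQ.1 r = PQ.2 r' := by
      by_contra! h₃
      exact hbad ⟨h₁, h₂, h₃⟩
    obtain ⟨r, hri, r', hrj, heq⟩ := h₃
    obtain rfl | hr' := Nat.eq_zero_or_pos r'
    · -- the endpoint `y = Q 0 ∈ S` cannot be a later vertex of `P`, and `P 0 = x ≠ y`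
      rw [hPQ.2.2.1] at heq
      obtain rfl | hr := Nat.eq_zero_or_pos r
      · exact absurd (hPQ.1.2.1.symm.trans heq) hxy
      · exact absurd (heq ▸ hy) (h₁ r hr hri)
    · exact .inr <| Set.mem_iUnion₂.2 ⟨(r, r'), Finset.mem_product.2
        ⟨Finset.mem_range.2 (by omega), Finset.mem_Icc.2 ⟨hr', hrj⟩⟩, hPQ, heq.symm⟩
  have hfin : (U₁ ∪ U₂ ∪ U₃).Finite :=
    ((pathsFrom_finite i x).prod (pathsFrom_finite j y)).subset <|
      Set.union_subset (Set.union_subset (Set.iUnion₂_subset fun _ _ => Set.sep_subset _ _)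
        (Set.iUnion₂_subset fun _ _ => Set.sep_subset _ _))
        (Set.iUnion₂_subset fun _ _ => Set.sep_subset _ _)
  have hU₁ : U₁.ncard ≤ S.card * i * Δ ^ (i + j - 1) := by
    refine (Finset.set_ncard_biUnion_le_card_mul (n := Δ ^ (i + j - 1)) _ _
      fun p hp => ?_).trans_eq (by simp)
    obtain ⟨hr, hri⟩ := Finset.mem_Icc.1 (Finset.mem_product.1 hp).2
    exact ncard_pairs_fst_apply_eq_le hΔ hr hri _
  have hU₂ : U₂.ncard ≤ S.card * j * Δ ^ (i + j - 1) := by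
    refine (Finset.set_ncard_biUnion_le_card_mul (n := Δ ^ (i + j - 1)) _ _
      fun p hp => ?_).trans_eq (by simp)
    obtain ⟨hr, hri⟩ := Finset.mem_Icc.1 (Finset.mem_product.1 hp).2
    exact ncard_pairs_snd_apply_eq_le hΔ (fun _ => p.1) hr hri
  have hU₃ : U₃.ncard ≤ (i + 1) * j * Δ ^ (i + j - 1) := by
    refine (Finset.set_ncard_biUnion_le_card_mul (n := Δ ^ (i + j - 1)) _ _
      fun p hp => ?_).trans_eq (by simp)
    obtain ⟨hr, hri⟩ := Finset.mem_Icc.1 (Finset.mem_product.1 hp).2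
    exact ncard_pairs_snd_apply_eq_le hΔ (fun P => P p.1) hr hri
  calc _ ≤ (U₁ ∪ U₂ ∪ U₃).ncard := Set.ncard_le_ncard hsub hfin
    _ ≤ U₁.ncard + U₂.ncard + U₃.ncard :=
        (Set.ncard_union_le _ _).trans (Nat.add_le_add_right (Set.ncard_union_le _ _) _)
    _ ≤ _ := by nlinarith

end Pairs

section AvoidingPath

variable {V : Type*} {G : SimpleGraph V}

def AvoidingPath (G : SimpleGraph V) (s : ℕ) (x y : V) (S : Finset V) (R : ℕ → V) : Prop :=
  PathSeq G s R ∧ R 0 = x ∧ R s = y ∧ ∀ r, 0 < r → r < s → R r ∉ S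

theorem AvoidingPath.mono {s : ℕ} {x y : V} {S S' : Finset V} {R : ℕ → V}
    (h : AvoidingPath G s x y S R) (hS : S' ⊆ S) : AvoidingPath G s x y S' R :=
  ⟨h.1, h.2.1, h.2.2.1, fun r hr hrs hR => h.2.2.2 r hr hrs (hS hR)⟩

theorem PathSeq.reverse {n : ℕ} {p : ℕ → V} (hp : PathSeq G n p) :
    PathSeq G n (fun r => p (n - r)) := by
  refine ⟨fun r hr => ?_, fun a b hab hb => (hp.2 (n - b) (n - a) (by omega) (by omega)).symm⟩
  simp only [show n - r = n - (r + 1) + 1 by omega]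
  exact (hp.1 _ (by omega)).symm

theorem AvoidingPath.reverse {s : ℕ} {x y : V} {S : Finset V} {R : ℕ → V}
    (h : AvoidingPath G s x y S R) : AvoidingPath G s y x S (fun r => R (s - r)) :=
  ⟨h.1.reverse, by simpa using h.2.2.1, by simpa using h.2.1,
    fun r hr hrs => h.2.2.2 (s - r) (by omega) (by omega)⟩

theorem PathSeq.append {a b : ℕ} {p q : ℕ → V} (hp : PathSeq G a p) (hq : PathSeq G b q)
    (hpq : p a = q 0) (hdisj : ∀ r ≤ a, ∀ r', 0 < r' → r' ≤ b → p r ≠ q r') :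
    PathSeq G (a + b) (fun r => if r ≤ a then p r else q (r - a)) := by
  constructor
  · intro r hr
    by_cases h₁ : r + 1 ≤ a
    · simp only [if_pos h₁, if_pos (by omega : r ≤ a)]
      exact hp.1 r h₁
    by_cases h₂ : r = a
    · subst h₂
      simp only [le_refl, if_true, if_neg h₁, hpq, show r + 1 - r = 0 + 1 by omega]
      exact hq.1 0 (by omega)
    · simp only [if_neg h₁, if_neg (by omega : ¬ r ≤ a), show r + 1 - a = r - a + 1 by omega]
      exact hq.1 _ (by omega)
  · intro r₁ r₂ h₁₂ h₂
    by_cases hr₂ : r₂ ≤ a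
    · simp only [if_pos hr₂, if_pos (h₁₂.le.trans hr₂)]
      exact hp.2 r₁ r₂ h₁₂ hr₂
    by_cases hr₁ : r₁ ≤ a
    · simp only [if_pos hr₁, if_neg hr₂]
      exact hdisj r₁ hr₁ _ (by omega) (by omega)
    · simp only [if_neg hr₁, if_neg hr₂]
      exact hq.2 _ _ (by omega) (by omega)

theorem AvoidingPath.append {a b : ℕ} {x y z : V} {S : Finset V} {p q : ℕ → V}
    (hp : AvoidingPath G a x z S p) (hq : AvoidingPath G b z y S q) (hz : 0 < a → 0 < b → z ∉ S)
    (hdisj : ∀ r ≤ a, ∀ r', 0 < r' → r' ≤ b → p r ≠ q r') :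
    AvoidingPath G (a + b) x y S (fun r => if r ≤ a then p r else q (r - a)) := by
  refine ⟨hp.1.append hq.1 (hp.2.2.1.trans hq.2.1.symm) hdisj, by simpa using hp.2.1, ?_,
    fun r hr hrs => ?_⟩
  · obtain rfl | hb := Nat.eq_zero_or_pos b
    · simp only [Nat.add_zero, le_refl, if_true]
      rw [hp.2.2.1, ← hq.2.2.1, hq.2.1]
    · simp only [if_neg (by omega : ¬ a + b ≤ a), Nat.add_sub_cancel_left]
      exact hq.2.2.1
  · dsimp only
    split_ifs with hra
    · obtain hra | rfl := hra.lt_or_eq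
      · exact hp.2.2.2 r hr hra
      · exact hp.2.2.1 ▸ hz hr (by omega)
    · exact hq.2.2.2 _ (by omega) (by omega)

theorem ManyDisjointPaths.exists_avoidingPath {m N : ℕ} {u w : V}
    (hmd : ManyDisjointPaths G m u w N) {T : Finset V} (hT : T.card < N) :
    ∃ M, AvoidingPath G m u w T M := by
  obtain ⟨P, hP, -, hdisj⟩ := hmd
  by_contra! hnone
  -- otherwise every path meets `T` inside, and the disjoint interiors give `N` points of `T`
  have hmeet : ∀ a, ∃ r, 0 < r ∧ r < m ∧ P a r ∈ T := fun a => by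
    by_contra! h
    exact hnone (P a) ⟨(hP a).1, (hP a).2.1, (hP a).2.2, h⟩
  choose r hr₀ hrm hrT using hmeet
  have := Finset.card_le_card_of_injOn (s := Finset.univ) (fun a => P a (r a)) (fun a _ => hrT a)
    fun a _ b _ hab => by_contra fun hne => hdisj a b hne _ _ (hr₀ a) (hrm a) (hr₀ b) (hrm b) hab
  simp only [Finset.card_univ, Fintype.card_fin] at this
  omega

end AvoidingPath

section Rich

variable {V : Type*} {G : SimpleGraph V} [Finite V] {k h : ℕ} {K δ : ℝ} {i j : ℕ} {x y : V}
  (hmax : ∀ v, ((G.neighborSet v).ncard : ℝ) ≤ K * δ)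
include hmax

theorem Rich.exists_pairAvoids (hr : Rich G k h K δ i j x y) {S : Finset V} (hy : y ∈ S)
    (hS : S.card ≤ h) :
    ∃ P ∈ pathsFrom G i x, ∃ Q ∈ pathsFrom G j y,
      ManyDisjointPaths G (2 * k - i - j) (P i) (Q j) ((h + 2) * (2 * k + 1) + 1) ∧
        PairAvoids S i j P Q := by
  obtain ⟨hxy, hcount⟩ := hr
  have hKδ : 0 ≤ K * δ := (Nat.cast_nonneg _).trans (hmax x)
  have hΔ : ∀ v, (G.neighborSet v).ncard ≤ ⌊K * δ⌋₊ := fun v => Nat.le_floor (hmax v)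
  by_contra! hnone
  refine hcount.not_ge ?_
  set bad := {PQ ∈ pathsFrom G i x ×ˢ pathsFrom G j y | ¬ PairAvoids S i j PQ.1 PQ.2}
  have hbad : bad.ncard ≤ (S.card * (i + j) + (i + 1) * j) * ⌊K * δ⌋₊ ^ (i + j - 1) :=
    ncard_not_pairAvoids_le hΔ hxy hy
  calc _ ≤ (bad.ncard : ℝ) := by
        refine Nat.cast_le.2 (Set.ncard_le_ncard ?_
          (((pathsFrom_finite i x).prod (pathsFrom_finite j y)).subset (Set.sep_subset _ _)))
        rintro PQ ⟨hP₁, hP₂, hP₃, hQ₁, hQ₂, hQ₃, hmd⟩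
        exact ⟨⟨⟨hP₁, hP₂, hP₃⟩, hQ₁, hQ₂, hQ₃⟩, hnone _ ⟨hP₁, hP₂, hP₃⟩ _ ⟨hQ₁, hQ₂, hQ₃⟩ hmd⟩
    _ ≤ ((S.card * (i + j) + (i + 1) * j : ℕ) : ℝ) * (⌊K * δ⌋₊ : ℝ) ^ (i + j - 1) := by
        exact_mod_cast hbad
    _ ≤ _ := by
        obtain hij | hij := Nat.eq_zero_or_pos (i + j)
        · -- both sides vanish, whatever the junk value `(K * δ) ^ (-1 : ℤ)` is
          obtain ⟨rfl, rfl⟩ : i = 0 ∧ j = 0 := by omega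
          simp
        have hc : S.card * (i + j) + (i + 1) * j
            ≤ 2 * (i + j) * h * (2 * k + 1) + 2 * (i + 1) * j := by
          nlinarith [Nat.mul_le_mul_right (i + j) hS, Nat.zero_le ((i + j) * h * k),
            Nat.zero_le ((i + j) * h), Nat.zero_le ((i + 1) * j)]
        rw [show (i : ℤ) + j - 1 = (i + j - 1 : ℕ) by omega, zpow_natCast]
        gcongr
        exact Nat.floor_le hKδ

theorem Rich.exists_avoidingPath (hr : Rich G k h K δ i j x y) (hij : i + j ≤ 2 * k)
    {S : Finset V} (hy : y ∈ S) (hS : S.card ≤ h) : ∃ R, AvoidingPath G (2 * k) x y S R := by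
  classical
  obtain ⟨P, hP, Q, hQ, hmd, hPS, hQS, hPQ⟩ := hr.exists_pairAvoids hmax hy hS
  set T := S ∪ (Finset.range (i + 1)).image P ∪ (Finset.range (j + 1)).image Q
  have hST : S ⊆ T := Finset.subset_union_left.trans Finset.subset_union_left
  have hPT : ∀ r ≤ i, P r ∈ T := fun r hr => Finset.mem_union_left _ <|
    Finset.mem_union_right _ <| Finset.mem_image_of_mem _ (Finset.mem_range.2 (by omega))
  have hQT : ∀ r ≤ j, Q r ∈ T := fun r hr => Finset.mem_union_right _ <|
    Finset.mem_image_of_mem _ (Finset.mem_range.2 (by omega))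
  have hT : T.card < (h + 2) * (2 * k + 1) + 1 := by
    have hPcard := (Finset.card_image_le (s := Finset.range (i + 1)) (f := P)).trans_eq
      (Finset.card_range _)
    have hQcard := (Finset.card_image_le (s := Finset.range (j + 1)) (f := Q)).trans_eq
      (Finset.card_range _)
    have hTcard : T.card ≤ S.card + ((Finset.range (i + 1)).image P).card
        + ((Finset.range (j + 1)).image Q).card :=
      (Finset.card_union_le _ _).trans (Nat.add_le_add_right (Finset.card_union_le _ _) _)
    nlinarith
  obtain ⟨M, hM⟩ := hmd.exists_avoidingPath hT
  have hPM := AvoidingPath.append (G := G) (p := P) (x := x) (S := S)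
    ⟨hP.1, hP.2.1, rfl, fun r hr hri => hPS r hr hri.le⟩ (hM.mono hST)
    (fun hi _ => hPS i hi le_rfl) fun r hr r' hr' hr'm => by
      obtain hlt | rfl := hr'm.lt_or_eq
      · exact fun h => hM.2.2.2 r' hr' hlt (h ▸ hPT r hr)
      · exact hM.2.2.1 ▸ hPQ r hr j le_rfl
  have hR := hPM.append (AvoidingPath.reverse (G := G) (R := Q)
      ⟨hQ.1, hQ.2.1, rfl, fun r hr hrj => hQS r hr hrj.le⟩)
    (fun _ hj => hQS j hj le_rfl) fun r hr r' hr' hr'j => by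
      split_ifs with hri
      · exact hPQ r hri (j - r') (by omega)
      obtain hlt | heq : r - i < 2 * k - i - j ∨ r - i = 2 * k - i - j := by omega
      · exact fun h => hM.2.2.2 (r - i) (by omega) hlt (h ▸ hQT _ (by omega))
      · rw [heq, hM.2.2.1]
        exact (hQ.1.2 (j - r') j (by omega) le_rfl).symm
  rw [show i + (2 * k - i - j) + j = 2 * k by omega] at hR
  exact ⟨_, hR⟩

theorem AuxAdj.exists_avoidingPath {ℓ : Fin (k + 1)} {u u' : Fin (k + 1) → V}
    (hadj : AuxAdj G k h K δ ℓ u u') {S : Finset V} (hu : u ℓ ∈ S) (hu' : u' ℓ ∈ S)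
    (hS : S.card ≤ h) : ∃ R, AvoidingPath G (2 * k) (u ℓ) (u' ℓ) S R := by
  obtain ⟨-, -, -, i, j, hi, hj, hr | hr⟩ := hadj
  · exact hr.exists_avoidingPath hmax (by omega) hu' hS
  · obtain ⟨R, hR⟩ := hr.exists_avoidingPath hmax (by omega) hu hS
    exact ⟨_, hR.reverse⟩

end Rich

section Packing

variable {V : Type*} {G : SimpleGraph V}

theorem exists_internallyDisjoint_avoidingPaths [Nonempty V] {ι : Type*} (E : Finset ι)
    (src tgt : ι → V) (B : Finset V) {s h : ℕ} (hcard : B.card + (s - 1) * E.card ≤ h)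
    (havoid : ∀ e ∈ E, ∀ S : Finset V, B ⊆ S → S.card ≤ h →
      ∃ R, AvoidingPath G s (src e) (tgt e) S R) :
    ∃ π : ι → ℕ → V, (∀ e ∈ E, AvoidingPath G s (src e) (tgt e) B (π e)) ∧
      ∀ e ∈ E, ∀ e' ∈ E, e ≠ e' → ∀ r r', 0 < r → r < s → 0 < r' → r' < s → π e r ≠ π e' r' := by
  classical
  induction E using Finset.induction_on with
  | empty => exact ⟨fun _ _ => Classical.arbitrary V, by simp, by simp⟩
  | insert e E he ih =>
    rw [Finset.card_insert_of_notMem he] at hcard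
    obtain ⟨π, hπ, hdisj⟩ :=
      ih (by nlinarith) fun e' he' => havoid e' (Finset.mem_insert_of_mem he')
    set S := B ∪ E.biUnion fun e' => (Finset.Ioo 0 s).image (π e')
    have hS : S.card ≤ h := by
      have := Finset.card_biUnion_le_card_mul E (fun e' => (Finset.Ioo 0 s).image (π e')) (s - 1)
        fun e' _ => Finset.card_image_le.trans (by simp)
      have := Finset.card_union_le B (E.biUnion fun e' => (Finset.Ioo 0 s).image (π e'))
      nlinarith
    obtain ⟨R, hR⟩ := havoid e (Finset.mem_insert_self e E) S Finset.subset_union_left hS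
    have hRπ : ∀ e' ∈ E, ∀ r r', 0 < r → r < s → 0 < r' → r' < s → R r ≠ π e' r' :=
      fun e' he' r r' hr hrs hr' hr's h => hR.2.2.2 r hr hrs <| h ▸ Finset.mem_union_right _
        (Finset.mem_biUnion.2 ⟨e', he', Finset.mem_image_of_mem _ (Finset.mem_Ioo.2 ⟨hr', hr's⟩)⟩)
    have hupd : ∀ e' ∈ E, Function.update π e R e' = π e' :=
      fun e' he' => Function.update_of_ne (ne_of_mem_of_not_mem he' he) _ _
    refine ⟨Function.update π e R, fun e' he' => ?_, ?_⟩
    · rcases Finset.mem_insert.1 he' with rfl | he'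
      · simpa using hR.mono Finset.subset_union_left
      · rw [hupd e' he']
        exact hπ e' he'
    · intro e₁ he₁ e₂ he₂ hne r r' hr hrs hr' hr's
      rcases Finset.mem_insert.1 he₁ with rfl | h₁ <;>
        rcases Finset.mem_insert.1 he₂ with rfl | h₂
      · exact absurd rfl hne
      · simpa [hupd e₂ h₂] using hRπ e₂ h₂ r r' hr hrs hr' hr's
      · simpa [hupd e₁ h₁] using (hRπ e₁ h₁ r' r hr' hr's hr hrs).symm
      · rw [hupd e₁ h₁, hupd e₂ h₂]
        exact hdisj e₁ h₁ e₂ h₂ hne r r' hr hrs hr' hr's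

theorem containsMultiSubdiv_of_forall_avoidingPath [Nonempty V] {t s h : ℕ}
    {m : Fin t → Fin t → ℕ} {φ : Fin t → V} (hφ : Function.Injective φ)
    (hcard : t + (s - 1) * ∑ p : Fin t × Fin t, (if p.1 < p.2 then m p.1 p.2 else 0) ≤ h)
    (hpath : ∀ a b, a ≠ b → ∀ S : Finset V, φ a ∈ S → φ b ∈ S → S.card ≤ h →
      ∃ R, AvoidingPath G s (φ a) (φ b) S R) :
    ContainsMultiSubdiv G t m s := by
  classical
  -- one slot `⟨(a, b), c⟩` for the `c`-th of the `m a b` parallel edges between `a < b`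
  set E := (Finset.univ : Finset (Fin t × Fin t)).sigma
    fun p => Finset.range (if p.1 < p.2 then m p.1 p.2 else 0)
  have hE : ∀ {a b : Fin t} {c : ℕ}, (⟨(a, b), c⟩ : (_ : Fin t × Fin t) × ℕ) ∈ E ↔
      a < b ∧ c < m a b := by
    intro a b c
    by_cases hab : a < b <;> simp [E, hab]
  have hEcard : (Finset.univ.image φ).card + (s - 1) * E.card ≤ h := by
    have hB := (Finset.card_image_le (s := Finset.univ) (f := φ)).trans_eq (Finset.card_fin t)
    rw [Finset.card_sigma]
    simpa [apply_ite] using (Nat.add_le_add_right hB _).trans hcard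
  have hEpath : ∀ e ∈ E, ∀ S : Finset V, Finset.univ.image φ ⊆ S → S.card ≤ h →
      ∃ R, AvoidingPath G s (φ e.1.1) (φ e.1.2) S R := by
    rintro ⟨⟨a, b⟩, c⟩ he S hS hScard
    exact hpath a b (hE.1 he).1.ne S (hS (Finset.mem_image_of_mem φ (Finset.mem_univ a)))
      (hS (Finset.mem_image_of_mem φ (Finset.mem_univ b))) hScard
  obtain ⟨π, hπ, hdisj⟩ := exists_internallyDisjoint_avoidingPaths E _ _ _ hEcard hEpath
  refine ⟨φ, fun a b c => π ⟨(a, b), c⟩, hφ, fun a b hab c => ?_, fun a b hab c r hr hrs d => ?_,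
    fun a b hab a' b' hab' c c' hne r r' hr hrs hr' hr's => ?_⟩
  · obtain ⟨h₁, h₂, h₃, -⟩ := hπ _ (hE.2 ⟨hab, c.2⟩)
    exact ⟨h₁, h₂, h₃⟩
  · exact fun h => (hπ _ (hE.2 ⟨hab, c.2⟩)).2.2.2 r hr hrs
      (Finset.mem_image.2 ⟨d, Finset.mem_univ d, h.symm⟩)
  · refine hdisj _ (hE.2 ⟨hab, c.2⟩) _ (hE.2 ⟨hab', c'.2⟩) (fun h => hne ?_) r r' hr hrs hr' hr's
    obtain ⟨h₁, h₂⟩ := Sigma.mk.inj_iff.1 h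
    obtain ⟨rfl, rfl⟩ := Prod.mk.inj h₁
    rw [eq_of_heq h₂]

end Packing

theorem aux_graph_is_clique_free_general
    {V : Type*} [Fintype V] (G : SimpleGraph V)
    (t k : ℕ)
    (m : Fin t → Fin t → ℕ)
    (K δ : ℝ)
    (hmax : ∀ v : V, ((G.neighborSet v).ncard : ℝ) ≤ K * δ)
    (hHfree : ¬ ContainsMultiSubdiv G t m (2 * k))
    (v : V) (ℓ : Fin (k + 1)) (hℓ : 1 ≤ (ℓ : ℕ)) :
    ¬ ∃ c : Fin t → (Fin (k + 1) → V),
        Function.Injective c ∧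
        (∀ a, c a 0 = v ∧ ∀ s : Fin k, G.Adj (c a s.castSucc) (c a s.succ)) ∧
        (∀ a b, a ≠ b → AuxAdj G k (nH t k m) K δ ℓ (c a) (c b)) := by
  rintro ⟨c, -, -, hadj⟩
  have : Nonempty V := ⟨v⟩
  have hℓ₀ : ℓ ≠ 0 := fun h => by simp [h] at hℓ
  have hφ : Function.Injective fun a => c a ℓ :=
    fun a b hab => by_contra fun hne => (hadj a b hne).2.2.1 ℓ ℓ hℓ₀ hℓ₀ hab
  exact hHfree <| containsMultiSubdiv_of_forall_avoidingPath hφ le_rfl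
    fun a b hab S ha hb hS => (hadj a b hab).exists_avoidingPath hmax ha hb hS

/-- **Lemma 4.4, first part.** Let `F` be a multigraph on `t` vertices,
`H = F^{2k-1}`, and let `G` have maximum degree at most `Kδ` and contain no copy of `H`.
Then for every vertex `v` and every `1 ≤ ℓ ≤ k`, the auxiliary graph `𝒢_ℓ(v)` (with
richness parameters `k`, `h = |V(H)|`, `K`, `δ`) contains no clique on `t` vertices. -/
theorem aux_graph_is_clique_free
    {V : Type*} [Fintype V] [DecidableEq V] (G : SimpleGraph V)
    (t k : ℕ) (hk : 1 ≤ k)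
    (m : Fin t → Fin t → ℕ) (hsymm : ∀ a b, m a b = m b a) (hirr : ∀ a, m a a = 0)
    (K δ : ℝ) (hK : 0 < K) (hδ : 0 < δ)
    (hmax : ∀ v : V, ((G.neighborSet v).ncard : ℝ) ≤ K * δ)
    (hHfree : ¬ ContainsMultiSubdiv G t m (2 * k))
    (v : V) (ℓ : Fin (k + 1)) (hℓ : 1 ≤ (ℓ : ℕ)) :
    ¬ ∃ c : Fin t → (Fin (k + 1) → V),
        Function.Injective c ∧
        (∀ a, c a 0 = v ∧ ∀ s : Fin k, G.Adj (c a s.castSucc) (c a s.succ)) ∧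
        (∀ a b, a ≠ b → AuxAdj G k (nH t k m) K δ ℓ (c a) (c b)) :=
  aux_graph_is_clique_free_general G t k m K δ hmax hHfree v ℓ hℓ
end
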